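/- arXiv:2309.00093 — 3 statements merged into one kernel-verified Lean document; each statement's English description precedes it below -/
import Mathlib

section
/- Let c > 0. The function K_c(x,y) = −(c/2)·x·∑_{m=0}^∞ (c(x² − y²)/4)^m / (m!·(m+1)!) satisfies, for all (x,y) ∈ ℝ²: ∂²K_c/∂y²(x,y) − ∂²K_c/∂x²(x,y) + c·K_c(x,y) = 0; and for all x ∈ ℝ: ∂K_c/∂y(x,0) = 0 and K_c(x,x) = −(c/2)·x. (In particular, K_c solves the backstepping kernel equation k_yy − k_xx + c·k = 0 on 0 < y < x < 1 with k_y(x,0) = 0 and k(x,x) = −cx/2.) -/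
/-- The backstepping kernel
`K_c(x,y) = −(c/2)·x·∑_{m=0}^∞ (c(x²−y²)/4)^m / (m!·(m+1)!)`. -/
noncomputable def Kker (c x y : ℝ) : ℝ :=
  -(c / 2) * x * ∑' m : ℕ, (c * (x ^ 2 - y ^ 2) / 4) ^ m /
    ((Nat.factorial m : ℝ) * (Nat.factorial (m + 1) : ℝ))

/-- Partial derivative in the first variable. -/
noncomputable def pdx (f : ℝ → ℝ → ℝ) (x y : ℝ) : ℝ := deriv (fun x' => f x' y) x

/-- Partial derivative in the second variable. -/
noncomputable def pdy (f : ℝ → ℝ → ℝ) (x y : ℝ) : ℝ := deriv (fun y' => f x y') y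

/-!
Write `K_c x y = -(c/2) x S(q)` with `q = c (x² - y²) / 4` and `S u = ∑ uⁿ / (n! (n+1)!)`.
By the chain rule, `K_yy - K_xx + c K = -(c²/2) x (S - 2 S' - q S'')(q)`, and termwise
differentiation of the power series shows that `S` solves `u S'' + 2 S' = S`. The boundary
conditions follow from `K_y = (c²/4) x y S'(q)` and `S 0 = 1`.
-/

open scoped Nat

section PowerSeries

theorem summable_mul_pow_of_abs_le_inv_factorial {a : ℕ → ℝ}
    (ha : ∀ n, |a n| ≤ (n ! : ℝ)⁻¹) (x : ℝ) : Summable fun n => a n * x ^ n := by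
  refine .of_norm_bounded (Real.summable_pow_div_factorial |x|) fun n => ?_
  rw [norm_mul, norm_pow, Real.norm_eq_abs, Real.norm_eq_abs, div_eq_inv_mul]
  exact mul_le_mul_of_nonneg_right (ha n) (by positivity)

/-- After splitting off the constant term, the derived series is dominated by `R ^ n / n!` on
the ball of radius `R`. -/
theorem hasDerivAt_tsum_mul_pow_of_abs_le_inv_factorial {a : ℕ → ℝ}
    (ha : ∀ n, |a n| ≤ (n ! : ℝ)⁻¹) (u : ℝ) :
    HasDerivAt (fun x => ∑' n, a n * x ^ n) (∑' n, (n + 1) * a (n + 1) * u ^ n) u := by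
  set R := |u| + 1
  have hu : u ∈ Metric.ball (0 : ℝ) R := by simp [R]
  have hbound : ∀ n, ∀ y ∈ Metric.ball (0 : ℝ) R,
      ‖(n + 1) * a (n + 1) * y ^ n‖ ≤ R ^ n / n ! := by
    intro n y hy
    have hy : |y| ≤ R := (mem_ball_zero_iff.mp hy).le
    have hcoeff : ((n : ℝ) + 1) * |a (n + 1)| ≤ (n ! : ℝ)⁻¹ :=
      calc ((n : ℝ) + 1) * |a (n + 1)| ≤ (n + 1) * ((n + 1)! : ℝ)⁻¹ := by
            gcongr; exact ha _
        _ = (n ! : ℝ)⁻¹ := by rw [Nat.factorial_succ]; push_cast; field_simp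
    rw [norm_mul, norm_mul, norm_pow, Real.norm_eq_abs, Real.norm_eq_abs, Real.norm_eq_abs,
      abs_of_nonneg (by positivity : (0 : ℝ) ≤ n + 1), div_eq_inv_mul]
    exact mul_le_mul hcoeff (pow_le_pow_left₀ (abs_nonneg y) hy n) (by positivity)
      (by positivity)
  have hsplit : (fun x => ∑' n, a n * x ^ n) = fun x => a 0 + ∑' n, a (n + 1) * x ^ (n + 1) :=
    funext fun x => by
      simpa using (summable_mul_pow_of_abs_le_inv_factorial ha x).tsum_eq_zero_add
  rw [hsplit]
  refine (hasDerivAt_tsum_of_isPreconnected (Real.summable_pow_div_factorial R)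
    Metric.isOpen_ball (convex_ball 0 R).isPreconnected (fun n y _ => ?_) hbound
    (Metric.mem_ball_self (by positivity)) (by simp) hu).const_add _
  exact ((hasDerivAt_pow (n + 1) y).const_mul (a (n + 1))).congr_deriv <| by
    rw [Nat.add_sub_cancel]; push_cast; ring

end PowerSeries

section BesselSeries

/-- The modified Bessel function of the first kind is
`I_k z = (z / 2) ^ k * besselSeries k (z ^ 2 / 4)`. -/
noncomputable def besselSeries (k : ℕ) (u : ℝ) : ℝ :=
  ∑' n : ℕ, u ^ n / ((n ! : ℝ) * ((n + k)! : ℝ))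

theorem besselSeries_eq_tsum_mul_pow (k : ℕ) :
    besselSeries k = fun u => ∑' n : ℕ, ((n ! : ℝ) * (n + k)!)⁻¹ * u ^ n :=
  funext fun _ => tsum_congr fun _ => div_eq_inv_mul _ _

theorem abs_inv_factorial_mul_factorial_le (k n : ℕ) :
    |((n ! : ℝ) * (n + k)!)⁻¹| ≤ (n ! : ℝ)⁻¹ := by
  rw [abs_of_nonneg (by positivity), mul_inv]
  exact mul_le_of_le_one_right (by positivity)
    (inv_le_one_of_one_le₀ (Nat.one_le_cast.mpr (n + k).factorial_pos))

theorem summable_besselSeries (k : ℕ) (u : ℝ) :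
    Summable fun n : ℕ => ((n ! : ℝ) * (n + k)!)⁻¹ * u ^ n :=
  summable_mul_pow_of_abs_le_inv_factorial (abs_inv_factorial_mul_factorial_le k) u

theorem hasDerivAt_besselSeries (k : ℕ) (u : ℝ) :
    HasDerivAt (besselSeries k) (besselSeries (k + 1) u) u := by
  rw [besselSeries_eq_tsum_mul_pow]
  convert hasDerivAt_tsum_mul_pow_of_abs_le_inv_factorial
    (abs_inv_factorial_mul_factorial_le k) u using 1
  refine tsum_congr fun n => ?_
  rw [show n + 1 + k = n + (k + 1) by omega, Nat.factorial_succ]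
  push_cast
  field_simp

theorem besselSeries_zero (k : ℕ) : besselSeries k 0 = (k ! : ℝ)⁻¹ := by
  rw [besselSeries, tsum_eq_single 0 fun n hn => by simp [hn]]
  simp

/-- `besselSeries k` solves `u f'' + (k + 1) f' = f`. -/
theorem besselSeries_ode (k : ℕ) (u : ℝ) :
    u * besselSeries (k + 2) u + (k + 1) * besselSeries (k + 1) u = besselSeries k u := by
  have hconst : (k ! : ℝ)⁻¹ - (k + 1) * ((k + 1)! : ℝ)⁻¹ = 0 := by
    rw [Nat.factorial_succ]; push_cast; field_simp; ring
  have hcoeff (n : ℕ) : (((n + 1)! : ℝ) * (n + 1 + k)!)⁻¹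
      - (k + 1) * (((n + 1)! : ℝ) * (n + 1 + (k + 1))!)⁻¹
      = ((n ! : ℝ) * (n + (k + 2))!)⁻¹ := by
    rw [show n + 1 + (k + 1) = n + 1 + k + 1 by omega,
      show n + (k + 2) = n + 1 + k + 1 by omega, Nat.factorial_succ (n + 1 + k),
      Nat.factorial_succ n]
    push_cast
    field_simp
    ring
  have hsum : Summable fun n : ℕ =>
      (((n ! : ℝ) * (n + k)!)⁻¹ - (k + 1) * ((n ! : ℝ) * (n + (k + 1))!)⁻¹) * u ^ n :=
    ((summable_besselSeries k u).sub ((summable_besselSeries (k + 1) u).mul_left ((k : ℝ) + 1)))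
      |>.congr fun n => by ring
  suffices besselSeries k u - (k + 1) * besselSeries (k + 1) u = u * besselSeries (k + 2) u by
    linarith
  calc besselSeries k u - (k + 1) * besselSeries (k + 1) u
      = ∑' n : ℕ, (((n ! : ℝ) * (n + k)!)⁻¹
          - (k + 1) * ((n ! : ℝ) * (n + (k + 1))!)⁻¹) * u ^ n := by
        simp only [besselSeries_eq_tsum_mul_pow, ← tsum_mul_left,
          ← (summable_besselSeries k u).tsum_sub ((summable_besselSeries (k + 1) u).mul_left _)]
        exact tsum_congr fun n => by ring
    _ = ∑' n : ℕ, ((n ! : ℝ) * (n + (k + 2))!)⁻¹ * u ^ (n + 1) := by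
        rw [hsum.tsum_eq_zero_add]
        simp only [Nat.factorial_zero, Nat.cast_one, one_mul, zero_add, hconst, zero_mul, hcoeff]
    _ = u * besselSeries (k + 2) u := by
        rw [besselSeries_eq_tsum_mul_pow, ← tsum_mul_left]
        exact tsum_congr fun n => by ring

end BesselSeries

section KernelEquation

theorem pdx_eq_of_hasDerivAt {F G : ℝ → ℝ → ℝ}
    (h : ∀ x y, HasDerivAt (fun x' => F x' y) (G x y) x) : pdx F = G :=
  funext₂ fun x y => (h x y).deriv

theorem pdy_eq_of_hasDerivAt {F G : ℝ → ℝ → ℝ}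
    (h : ∀ x y, HasDerivAt (fun y' => F x y') (G x y) y) : pdy F = G :=
  funext₂ fun x y => (h x y).deriv

variable {f f' f'' : ℝ → ℝ}

theorem hasDerivAt_comp_hyperbolic_fst (hf : ∀ u, HasDerivAt f (f' u) u) (c x y : ℝ) :
    HasDerivAt (fun x => f (c * (x ^ 2 - y ^ 2) / 4))
      (f' (c * (x ^ 2 - y ^ 2) / 4) * (c * x / 2)) x :=
  (hf _).comp x <|
    ((((hasDerivAt_pow 2 x).sub_const _).const_mul c).div_const 4).congr_deriv (by ring)

theorem hasDerivAt_comp_hyperbolic_snd (hf : ∀ u, HasDerivAt f (f' u) u) (c x y : ℝ) :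
    HasDerivAt (fun y => f (c * (x ^ 2 - y ^ 2) / 4))
      (f' (c * (x ^ 2 - y ^ 2) / 4) * -(c * y / 2)) y :=
  (hf _).comp y <|
    ((((hasDerivAt_pow 2 y).const_sub _).const_mul c).div_const 4).congr_deriv (by ring)

theorem pdx_mul_comp_hyperbolic (hf : ∀ u, HasDerivAt f (f' u) u) (a c : ℝ) :
    pdx (fun x y => a * x * f (c * (x ^ 2 - y ^ 2) / 4)) = fun x y =>
      a * (f (c * (x ^ 2 - y ^ 2) / 4) + c / 2 * x ^ 2 * f' (c * (x ^ 2 - y ^ 2) / 4)) :=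
  pdx_eq_of_hasDerivAt fun x y =>
    (((hasDerivAt_id' x).const_mul a).mul (hasDerivAt_comp_hyperbolic_fst hf c x y)).congr_deriv
      (by ring)

theorem pdx_pdx_mul_comp_hyperbolic (hf : ∀ u, HasDerivAt f (f' u) u)
    (hf' : ∀ u, HasDerivAt f' (f'' u) u) (a c : ℝ) :
    pdx (pdx fun x y => a * x * f (c * (x ^ 2 - y ^ 2) / 4)) = fun x y =>
      a * (3 * c / 2 * x * f' (c * (x ^ 2 - y ^ 2) / 4)
        + c ^ 2 / 4 * x ^ 3 * f'' (c * (x ^ 2 - y ^ 2) / 4)) := by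
  rw [pdx_mul_comp_hyperbolic hf]
  exact pdx_eq_of_hasDerivAt fun x y =>
    (((hasDerivAt_comp_hyperbolic_fst hf c x y).add (((hasDerivAt_pow 2 x).const_mul (c / 2)).mul
      (hasDerivAt_comp_hyperbolic_fst hf' c x y))).const_mul a).congr_deriv (by ring)

theorem pdy_mul_comp_hyperbolic (hf : ∀ u, HasDerivAt f (f' u) u) (a c : ℝ) :
    pdy (fun x y => a * x * f (c * (x ^ 2 - y ^ 2) / 4)) = fun x y =>
      -(a * c / 2) * x * y * f' (c * (x ^ 2 - y ^ 2) / 4) :=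
  pdy_eq_of_hasDerivAt fun x y =>
    ((hasDerivAt_comp_hyperbolic_snd hf c x y).const_mul (a * x)).congr_deriv (by ring)

theorem pdy_pdy_mul_comp_hyperbolic (hf : ∀ u, HasDerivAt f (f' u) u)
    (hf' : ∀ u, HasDerivAt f' (f'' u) u) (a c : ℝ) :
    pdy (pdy fun x y => a * x * f (c * (x ^ 2 - y ^ 2) / 4)) = fun x y =>
      -(a * c / 2) * x * (f' (c * (x ^ 2 - y ^ 2) / 4)
        - c / 2 * y ^ 2 * f'' (c * (x ^ 2 - y ^ 2) / 4)) := by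
  rw [pdy_mul_comp_hyperbolic hf]
  exact pdy_eq_of_hasDerivAt fun x y =>
    (((hasDerivAt_id' y).const_mul (-(a * c / 2) * x)).mul
      (hasDerivAt_comp_hyperbolic_snd hf' c x y)).congr_deriv (by ring)

theorem pdy_pdy_sub_pdx_pdx_add_mul_comp_hyperbolic (hf : ∀ u, HasDerivAt f (f' u) u)
    (hf' : ∀ u, HasDerivAt f' (f'' u) u) (a c x y : ℝ) :
    let q := c * (x ^ 2 - y ^ 2) / 4
    let K := fun x y => a * x * f (c * (x ^ 2 - y ^ 2) / 4)
    pdy (pdy K) x y - pdx (pdx K) x y + c * K x y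
      = a * c * x * (f q - 2 * f' q - q * f'' q) := by
  simp only [pdy_pdy_mul_comp_hyperbolic hf hf', pdx_pdx_mul_comp_hyperbolic hf hf']
  ring

end KernelEquation

theorem Kker_solves_kernel_equation_general (c : ℝ) :
    (∀ x y : ℝ,
      pdy (pdy (Kker c)) x y - pdx (pdx (Kker c)) x y + c * Kker c x y = 0) ∧
    (∀ x : ℝ, pdy (Kker c) x 0 = 0) ∧
    (∀ x : ℝ, Kker c x x = -(c / 2) * x) := by
  have hK : Kker c = fun x y => -(c / 2) * x * besselSeries 1 (c * (x ^ 2 - y ^ 2) / 4) := rfl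
  have hB (k : ℕ) := hasDerivAt_besselSeries k
  refine ⟨fun x y => ?_, fun x => ?_, fun x => ?_⟩
  · rw [hK, pdy_pdy_sub_pdx_pdx_add_mul_comp_hyperbolic (hB 1) (hB 2), ← besselSeries_ode 1]
    push_cast
    ring
  · rw [hK, pdy_mul_comp_hyperbolic (hB 1)]
    ring
  · rw [hK]
    simp [besselSeries_zero]

/-- the kernel `K_c` solves the backstepping kernel equation
`k_yy − k_xx + c·k = 0` with `k_y(x,0) = 0` and `k(x,x) = −cx/2`. -/
theorem Kker_solves_kernel_equation (c : ℝ) (hc : c > 0) :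
    (∀ x y : ℝ,
      pdy (pdy (Kker c)) x y - pdx (pdx (Kker c)) x y + c * Kker c x y = 0) ∧
    (∀ x : ℝ, pdy (Kker c) x 0 = 0) ∧
    (∀ x : ℝ, Kker c x x = -(c / 2) * x) :=
  Kker_solves_kernel_equation_general c
end

section
/- Let ρ, α, β ∈ ℝ, γ > 0, c₂ > 0; set K = K_{c₂}, L = L_{c₂}, ‖K‖ = (∫₀¹∫₀ˣ K(x,y)² dy dx)^{1/2}, ‖L‖ = (∫₀¹∫₀ˣ L(x,y)² dy dx)^{1/2}. Suppose w̃, v : [0,1] × [0,∞) → ℝ are continuous, twice continuously differentiable in x with jointly continuous spatial derivatives, w̃ is continuously differentiable in t with w̃_t jointly continuous, and for all x ∈ [0,1], t ≥ 0: w̃_t = w̃_xx − (c₂ + ρ)w̃ + αv − α∫₀ˣ K(x,y)v(y,t)dy; 0 = v_xx − γv + βw̃ + β∫₀ˣ L(x,y)w̃(y,t)dy; w̃_x(0,t) = w̃_x(1,t) = 0; v_x(0,t) = v_x(1,t) = 0. If c₂ + ρ > (|αβ|/γ)·(1 + ‖L‖)·(1 + ‖K‖), then with c₃ = (c₂ +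 ρ) − (|αβ|/γ)·(1 + ‖L‖)·(1 + ‖K‖), for all t ≥ 0: ∫₀¹ w̃(x,t)² dx ≤ e^{−2c₃t}·∫₀¹ w̃(x,0)² dx, and moreover ∫₀¹ v(x,t)² dx ≤ (β/γ)²·(1 + ‖L‖)²·e^{−2c₃t}·∫₀¹ w̃(x,0)² dx. -/
/-- The inverse backstepping kernel `L_c`. -/
noncomputable def Lker (c x y : ℝ) : ℝ :=
  -(c / 2) * x * ∑' m : ℕ, (-1 : ℝ) ^ m * (c * (x ^ 2 - y ^ 2) / 4) ^ m /
    ((Nat.factorial m : ℝ) * (Nat.factorial (m + 1) : ℝ))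

/-- L² norm of a kernel over the triangle {0 ≤ y ≤ x ≤ 1}. -/
noncomputable def kerNorm (f : ℝ → ℝ → ℝ) : ℝ :=
  Real.sqrt (∫ x in (0:ℝ)..1, ∫ y in (0:ℝ)..x, (f x y) ^ 2)

/-!
Testing each equation against its own unknown and integrating by parts under the Neumann
conditions removes the second-derivative terms, and Cauchy–Schwarz bounds each Volterra term by
the `L²` norm of its kernel over the triangle `0 ≤ y ≤ x ≤ 1`. The elliptic equation then gives
`γ ‖v‖ ≤ |β| (1 + ‖L‖) ‖w̃‖`; fed into the parabolic equation this yields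
`d/dt ∫₀¹ w̃² ≤ -2 c₃ ∫₀¹ w̃²`, so Grönwall's inequality gives the decay of `w̃`, and the
elliptic bound transfers it to `v`.
-/

open MeasureTheory Set intervalIntegral
open scoped Nat Topology

lemma continuous_tsum_mul_pow_of_abs_le_inv_factorial {a : ℕ → ℝ}
    (ha : ∀ m, |a m| ≤ (m ! : ℝ)⁻¹) : Continuous fun z : ℝ => ∑' m, a m * z ^ m := by
  refine continuous_iff_continuousAt.2 fun z₀ => ?_
  have hball : Metric.closedBall (0 : ℝ) (|z₀| + 1) ∈ 𝓝 z₀ :=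
    Metric.closedBall_mem_nhds_of_mem (by simp)
  refine (continuousOn_tsum (f := fun m z => a m * z ^ m) (fun m => by fun_prop)
    (Real.summable_pow_div_factorial (|z₀| + 1)) fun m z hz => ?_).continuousAt hball
  rw [norm_mul, norm_pow, Real.norm_eq_abs, Real.norm_eq_abs, div_eq_inv_mul]
  gcongr
  · exact ha m
  · simpa using hz

lemma continuous_kernel_series (c : ℝ) {a : ℕ → ℝ} (ha : ∀ m, |a m| ≤ (m ! : ℝ)⁻¹) :
    Continuous fun p : ℝ × ℝ =>
      -(c / 2) * p.1 * ∑' m, a m * (c * (p.1 ^ 2 - p.2 ^ 2) / 4) ^ m :=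
  (continuous_const.mul continuous_fst).mul
    ((continuous_tsum_mul_pow_of_abs_le_inv_factorial ha).comp (by fun_prop))

lemma inv_factorial_mul_factorial_succ_le (m : ℕ) :
    ((m ! : ℝ) * (m + 1)!)⁻¹ ≤ (m ! : ℝ)⁻¹ :=
  inv_anti₀ (by positivity) (le_mul_of_one_le_right (by positivity)
    (by exact_mod_cast (m + 1).factorial_pos))

lemma continuous_Kker (c : ℝ) : Continuous fun p : ℝ × ℝ => Kker c p.1 p.2 := by
  refine (continuous_kernel_series c (a := fun m => ((m ! : ℝ) * (m + 1)!)⁻¹)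
    fun m => ?_).congr fun p => ?_
  · rw [abs_of_pos (by positivity)]
    exact inv_factorial_mul_factorial_succ_le m
  · simp only [Kker, div_eq_mul_inv]
    congr 1
    exact tsum_congr fun m => by ring

lemma continuous_Lker (c : ℝ) : Continuous fun p : ℝ × ℝ => Lker c p.1 p.2 := by
  refine (continuous_kernel_series c (a := fun m => (-1) ^ m * ((m ! : ℝ) * (m + 1)!)⁻¹)
    fun m => ?_).congr fun p => ?_
  · rw [abs_mul, abs_pow, abs_neg, abs_one, one_pow, one_mul, abs_of_pos (by positivity)]
    exact inv_factorial_mul_factorial_succ_le m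
  · simp only [Lker, div_eq_mul_inv]
    congr 1
    exact tsum_congr fun m => by ring

theorem sq_integral_mul_le {α : Type*} [MeasurableSpace α] {μ : Measure α} {f g : α → ℝ}
    (hf : Integrable (fun x => f x ^ 2) μ) (hg : Integrable (fun x => g x ^ 2) μ)
    (hfg : Integrable (fun x => f x * g x) μ) :
    (∫ x, f x * g x ∂μ) ^ 2 ≤ (∫ x, f x ^ 2 ∂μ) * ∫ x, g x ^ 2 ∂μ := by
  have hquad : ∀ r : ℝ,
      0 ≤ (∫ x, f x ^ 2 ∂μ) * (r * r) + 2 * (∫ x, f x * g x ∂μ) * r + ∫ x, g x ^ 2 ∂μ := by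
    intro r
    have hexpand : ∫ x, (r * f x + g x) ^ 2 ∂μ
        = (∫ x, f x ^ 2 ∂μ) * (r * r) + 2 * (∫ x, f x * g x ∂μ) * r + ∫ x, g x ^ 2 ∂μ := by
      calc ∫ x, (r * f x + g x) ^ 2 ∂μ
          = ∫ x, (r * r) * f x ^ 2 + (2 * r) * (f x * g x) + g x ^ 2 ∂μ := by
            congr with x
            ring
        _ = _ := by
            rw [integral_add (f := fun x => (r * r) * f x ^ 2 + (2 * r) * (f x * g x))
                ((hf.const_mul _).add (hfg.const_mul _)) hg,
              integral_add (hf.const_mul _) (hfg.const_mul _),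
              MeasureTheory.integral_const_mul, MeasureTheory.integral_const_mul]
            ring
    exact hexpand ▸ integral_nonneg fun x => sq_nonneg _
  have := discrim_le_zero hquad
  rw [discrim] at this
  nlinarith

theorem sq_intervalIntegral_mul_le {a b : ℝ} (hab : a ≤ b) {f g : ℝ → ℝ}
    (hf : Continuous f) (hg : Continuous g) :
    (∫ x in a..b, f x * g x) ^ 2 ≤ (∫ x in a..b, f x ^ 2) * ∫ x in a..b, g x ^ 2 := by
  simp only [integral_of_le hab]
  exact sq_integral_mul_le (hf.pow 2).integrableOn_Ioc (hg.pow 2).integrableOn_Ioc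
    (hf.mul hg).integrableOn_Ioc

noncomputable def l2Norm (f : ℝ → ℝ) : ℝ := √(∫ x in (0:ℝ)..1, f x ^ 2)

lemma l2Norm_nonneg (f : ℝ → ℝ) : 0 ≤ l2Norm f := Real.sqrt_nonneg _

lemma sq_l2Norm (f : ℝ → ℝ) : l2Norm f ^ 2 = ∫ x in (0:ℝ)..1, f x ^ 2 :=
  Real.sq_sqrt (integral_nonneg zero_le_one fun _ _ => sq_nonneg _)

lemma kerNorm_nonneg (K : ℝ → ℝ → ℝ) : 0 ≤ kerNorm K := Real.sqrt_nonneg _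

lemma sq_kerNorm (K : ℝ → ℝ → ℝ) :
    kerNorm K ^ 2 = ∫ x in (0:ℝ)..1, ∫ y in (0:ℝ)..x, K x y ^ 2 :=
  Real.sq_sqrt (integral_nonneg zero_le_one fun _ hx =>
    integral_nonneg hx.1 fun _ _ => sq_nonneg _)

theorem abs_integral_mul_le_l2Norm_mul {f g : ℝ → ℝ} (hf : Continuous f) (hg : Continuous g) :
    |∫ x in (0:ℝ)..1, f x * g x| ≤ l2Norm f * l2Norm g := by
  rw [l2Norm, l2Norm, ← Real.sqrt_mul (integral_nonneg zero_le_one fun _ _ => sq_nonneg _)]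
  exact Real.abs_le_sqrt (sq_intervalIntegral_mul_le zero_le_one hf hg)

section Volterra

variable {K : ℝ → ℝ → ℝ} {f : ℝ → ℝ}

lemma continuous_volterra (hK : Continuous fun p : ℝ × ℝ => K p.1 p.2)
    (hf : Continuous f) : Continuous fun x => ∫ y in (0:ℝ)..x, K x y * f y :=
  continuous_parametric_intervalIntegral_of_continuous (hK.mul (hf.comp continuous_snd))
    continuous_id

lemma integral_sq_volterra_le (hK : Continuous fun p : ℝ × ℝ => K p.1 p.2)
    (hf : Continuous f) :
    ∫ x in (0:ℝ)..1, (∫ y in (0:ℝ)..x, K x y * f y) ^ 2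
      ≤ kerNorm K ^ 2 * ∫ x in (0:ℝ)..1, f x ^ 2 := by
  have hpointwise : ∀ x ∈ Icc (0:ℝ) 1, (∫ y in (0:ℝ)..x, K x y * f y) ^ 2
      ≤ (∫ y in (0:ℝ)..x, K x y ^ 2) * ∫ y in (0:ℝ)..1, f y ^ 2 := fun x hx =>
    (sq_intervalIntegral_mul_le hx.1 (f := K x) (hK.comp (.prodMk_right x)) hf).trans <|
      mul_le_mul_of_nonneg_left
        (integral_mono_interval le_rfl hx.1 hx.2 (.of_forall fun _ => sq_nonneg _)
          ((hf.pow 2).intervalIntegrable 0 1))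
        (integral_nonneg hx.1 fun _ _ => sq_nonneg _)
  rw [sq_kerNorm, ← intervalIntegral.integral_mul_const]
  exact integral_mono_on zero_le_one
    (((continuous_volterra hK hf).pow 2).intervalIntegrable 0 1)
    ((continuous_parametric_intervalIntegral_of_continuous (hK.pow 2) continuous_id
      |>.mul continuous_const).intervalIntegrable 0 1) hpointwise

lemma l2Norm_volterra_le (hK : Continuous fun p : ℝ × ℝ => K p.1 p.2)
    (hf : Continuous f) :
    l2Norm (fun x => ∫ y in (0:ℝ)..x, K x y * f y) ≤ kerNorm K * l2Norm f := by
  refine (pow_le_pow_iff_left₀ (l2Norm_nonneg _)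
    (mul_nonneg (kerNorm_nonneg K) (l2Norm_nonneg f)) two_ne_zero).1 ?_
  rw [mul_pow, sq_l2Norm, sq_l2Norm]
  exact integral_sq_volterra_le hK hf

theorem abs_integral_mul_volterra_le (hK : Continuous fun p : ℝ × ℝ => K p.1 p.2)
    (hf : Continuous f) {g : ℝ → ℝ} (hg : Continuous g) :
    |∫ x in (0:ℝ)..1, g x * ∫ y in (0:ℝ)..x, K x y * f y| ≤ kerNorm K * l2Norm f * l2Norm g :=
  (abs_integral_mul_le_l2Norm_mul hg (continuous_volterra hK hf)).trans <| by
    rw [mul_comm _ (l2Norm g)]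
    exact mul_le_mul_of_nonneg_left (l2Norm_volterra_le hK hf) (l2Norm_nonneg g)

end Volterra

theorem integral_mul_deriv_deriv_nonpos {f : ℝ → ℝ} (hf : ContDiff ℝ 2 f) {a b : ℝ} (hab : a ≤ b)
    (ha : deriv f a = 0) (hb : deriv f b = 0) :
    ∫ x in a..b, f x * deriv (deriv f) x ≤ 0 := by
  have hf' : ContDiff ℝ 1 (deriv f) := (contDiff_succ_iff_deriv.1 hf).2.2
  have hf₁ : Continuous (deriv f) := hf.continuous_deriv one_le_two
  have hf₂ : Continuous (deriv (deriv f)) := hf'.continuous_deriv le_rfl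
  have hparts := integral_deriv_mul_eq_sub (a := a) (b := b)
    (fun x _ => (hf.differentiable two_ne_zero x).hasDerivAt)
    (fun x _ => (hf'.differentiable one_ne_zero x).hasDerivAt)
    (hf₁.intervalIntegrable a b) (hf₂.intervalIntegrable a b)
  rw [ha, hb, mul_zero, mul_zero, sub_zero,
    integral_add (f := fun x => deriv f x * deriv f x) (g := fun x => f x * deriv (deriv f) x)
      ((hf₁.mul hf₁).intervalIntegrable a b) ((hf.continuous.mul hf₂).intervalIntegrable a b)]
    at hparts
  have hsq : 0 ≤ ∫ x in a..b, deriv f x * deriv f x :=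
    integral_nonneg hab fun x _ => mul_self_nonneg _
  linarith

lemma mul_le_abs_mul_of_abs_le {β I B : ℝ} (h : |I| ≤ B) : β * I ≤ |β| * B :=
  (le_abs_self _).trans (abs_mul β I ▸ mul_le_mul_of_nonneg_left h (abs_nonneg β))

theorem l2Norm_le_of_elliptic {γ β : ℝ} (hγ : 0 < γ) {L : ℝ → ℝ → ℝ}
    (hL : Continuous fun p : ℝ × ℝ => L p.1 p.2) {w v : ℝ → ℝ} (hw : Continuous w)
    (hv : ContDiff ℝ 2 v) (hv₀ : deriv v 0 = 0) (hv₁ : deriv v 1 = 0)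
    (heq : ∀ x ∈ Icc (0:ℝ) 1,
      0 = deriv (deriv v) x - γ * v x + β * w x + β * ∫ y in (0:ℝ)..x, L x y * w y) :
    l2Norm v ≤ |β| / γ * (1 + kerNorm L) * l2Norm w := by
  have hv₂ : Continuous (deriv (deriv v)) :=
    (contDiff_succ_iff_deriv.1 hv).2.2.continuous_deriv le_rfl
  have hLw := continuous_volterra hL hw
  have hid : γ * l2Norm v ^ 2 = (∫ x in (0:ℝ)..1, v x * deriv (deriv v) x)
      + β * (∫ x in (0:ℝ)..1, v x * w x)
      + β * ∫ x in (0:ℝ)..1, v x * ∫ y in (0:ℝ)..x, L x y * w y := by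
    rw [sq_l2Norm, ← intervalIntegral.integral_const_mul, ← intervalIntegral.integral_const_mul,
      ← intervalIntegral.integral_const_mul, ← intervalIntegral.integral_add,
      ← intervalIntegral.integral_add]
    · refine integral_congr fun x hx => ?_
      rw [uIcc_of_le zero_le_one] at hx
      linear_combination v x * heq x hx
    all_goals exact Continuous.intervalIntegrable (by fun_prop) _ _
  have hquad : γ * l2Norm v ^ 2 ≤ |β| * (1 + kerNorm L) * l2Norm w * l2Norm v := by
    have hdiffusion := integral_mul_deriv_deriv_nonpos hv zero_le_one hv₀ hv₁
    have hlocal := mul_le_abs_mul_of_abs_le (β := β)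
      (abs_integral_mul_le_l2Norm_mul hv.continuous hw)
    have hvolterra := mul_le_abs_mul_of_abs_le (β := β)
      (abs_integral_mul_volterra_le hL hw hv.continuous)
    linarith
  rw [div_mul_eq_mul_div, div_mul_eq_mul_div, le_div_iff₀ hγ]
  rcases (l2Norm_nonneg v).eq_or_lt with hzero | hpos
  · rw [← hzero, zero_mul]
    exact mul_nonneg (mul_nonneg (abs_nonneg β) (add_nonneg zero_le_one (kerNorm_nonneg L)))
      (l2Norm_nonneg w)
  · nlinarith

theorem integral_mul_le_of_parabolic {a α : ℝ} {K : ℝ → ℝ → ℝ}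
    (hK : Continuous fun p : ℝ × ℝ => K p.1 p.2) {w v wt : ℝ → ℝ} (hw : ContDiff ℝ 2 w)
    (hw₀ : deriv w 0 = 0) (hw₁ : deriv w 1 = 0) (hv : Continuous v)
    (heq : ∀ x ∈ Icc (0:ℝ) 1,
      wt x = deriv (deriv w) x - a * w x + α * v x - α * ∫ y in (0:ℝ)..x, K x y * v y) :
    ∫ x in (0:ℝ)..1, w x * wt x
      ≤ -a * l2Norm w ^ 2 + |α| * (1 + kerNorm K) * l2Norm v * l2Norm w := by
  have hw₂ : Continuous (deriv (deriv w)) :=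
    (contDiff_succ_iff_deriv.1 hw).2.2.continuous_deriv le_rfl
  have hKv := continuous_volterra hK hv
  have hid : ∫ x in (0:ℝ)..1, w x * wt x = (∫ x in (0:ℝ)..1, w x * deriv (deriv w) x)
      - a * l2Norm w ^ 2 + α * (∫ x in (0:ℝ)..1, w x * v x)
      - α * ∫ x in (0:ℝ)..1, w x * ∫ y in (0:ℝ)..x, K x y * v y := by
    rw [sq_l2Norm, ← intervalIntegral.integral_const_mul, ← intervalIntegral.integral_const_mul,
      ← intervalIntegral.integral_const_mul, ← intervalIntegral.integral_sub,
      ← intervalIntegral.integral_add, ← intervalIntegral.integral_sub]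
    · refine integral_congr fun x hx => ?_
      rw [uIcc_of_le zero_le_one] at hx
      simp only [heq x hx]
      ring
    all_goals exact Continuous.intervalIntegrable (by fun_prop) _ _
  have hdiffusion := integral_mul_deriv_deriv_nonpos hw zero_le_one hw₀ hw₁
  have hlocal := mul_le_abs_mul_of_abs_le (β := α)
    (abs_integral_mul_le_l2Norm_mul hw.continuous hv)
  have hvolterra := mul_le_abs_mul_of_abs_le (β := -α)
    (abs_integral_mul_volterra_le hK hv hw.continuous)
  rw [abs_neg] at hvolterra
  linarith

lemma hasDerivAt_integral_sq {u : ℝ → ℝ → ℝ} (hu : Continuous fun p : ℝ × ℝ => u p.1 p.2)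
    (hdiff : ∀ x, Differentiable ℝ (u x))
    (hut : Continuous fun p : ℝ × ℝ => deriv (u p.1) p.2) (a b t : ℝ) :
    HasDerivAt (fun s => ∫ x in a..b, u x s ^ 2)
      (2 * ∫ x in a..b, u x t * deriv (u x) t) t := by
  have hslice : ∀ s, Continuous fun x => u x s := fun s => hu.comp (.prodMk_left s)
  have hF' : Continuous fun p : ℝ × ℝ => 2 * (u p.1 p.2 * deriv (u p.1) p.2) := by fun_prop
  obtain ⟨M, hM⟩ := (isCompact_uIcc.prod (isCompact_Icc (a := t - 1) (b := t + 1)))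
    |>.exists_bound_of_continuousOn hF'.continuousOn
  rw [← intervalIntegral.integral_const_mul]
  refine (intervalIntegral.hasDerivAt_integral_of_dominated_loc_of_deriv_le
    (bound := fun _ => M) (F := fun s x => u x s ^ 2)
    (F' := fun s x => 2 * (u x s * deriv (u x) s)) (Metric.ball_mem_nhds t one_pos)
    (.of_forall fun s => ((hslice s).pow 2).aestronglyMeasurable)
    (((hslice t).pow 2).intervalIntegrable a b)
    (hF'.comp (.prodMk_left t) |>.aestronglyMeasurable) (.of_forall fun x hx s hs => ?_)
    intervalIntegrable_const (.of_forall fun x _ s _ => ?_)).2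
  · refine hM (x, s) ⟨uIoc_subset_uIcc hx, ?_⟩
    rw [Metric.mem_ball, Real.dist_eq, abs_sub_lt_iff] at hs
    constructor <;> linarith
  · exact ((hdiff x s).hasDerivAt.fun_pow 2).congr_deriv (by norm_num; ring)

lemma le_exp_mul_of_hasDerivAt_le_mul {f f' : ℝ → ℝ} {k : ℝ}
    (hf : ∀ t, 0 ≤ t → HasDerivAt f (f' t) t) (hbound : ∀ t, 0 ≤ t → f' t ≤ k * f t)
    {t : ℝ} (ht : 0 ≤ t) : f t ≤ Real.exp (k * t) * f 0 := by
  have := le_gronwallBound_of_liminf_deriv_right_le (f' := f') (ε := 0) (a := 0) (b := t)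
    (fun s hs => (hf s hs.1).continuousAt.continuousWithinAt)
    (fun s hs r hr => (hf s hs.1).hasDerivWithinAt.liminf_right_slope_le hr) le_rfl
    (fun s hs => by simpa using hbound s hs.1) t ⟨ht, le_rfl⟩
  rwa [gronwallBound_ε0, sub_zero, mul_comm] at this

theorem target_system_exponential_decay_general (ρ α β γ c₂ : ℝ) (hγ : γ > 0)
    (tw v : ℝ → ℝ → ℝ)
    -- regularity
    (htw_cont : Continuous fun p : ℝ × ℝ => tw p.1 p.2)
    (htw_x : ∀ t : ℝ, ContDiff ℝ 2 fun x => tw x t)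
    (hv_x : ∀ t : ℝ, ContDiff ℝ 2 fun x => v x t)
    (htw_t : ∀ x : ℝ, ContDiff ℝ 1 fun t => tw x t)
    (htwt_cont : Continuous fun p : ℝ × ℝ => deriv (fun t => tw p.1 t) p.2)
    -- the target system
    (hpde : ∀ x ∈ Set.Icc (0:ℝ) 1, ∀ t : ℝ, 0 ≤ t →
      deriv (fun τ => tw x τ) t =
        deriv (deriv (fun ξ => tw ξ t)) x - (c₂ + ρ) * tw x t + α * v x t -
          α * ∫ y in (0:ℝ)..x, Kker c₂ x y * v y t)
    (hell : ∀ x ∈ Set.Icc (0:ℝ) 1, ∀ t : ℝ, 0 ≤ t →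
      (0 : ℝ) = deriv (deriv (fun ξ => v ξ t)) x - γ * v x t + β * tw x t +
        β * ∫ y in (0:ℝ)..x, Lker c₂ x y * tw y t)
    (hbw0 : ∀ t : ℝ, 0 ≤ t → deriv (fun ξ => tw ξ t) 0 = 0)
    (hbw1 : ∀ t : ℝ, 0 ≤ t → deriv (fun ξ => tw ξ t) 1 = 0)
    (hbv0 : ∀ t : ℝ, 0 ≤ t → deriv (fun ξ => v ξ t) 0 = 0)
    (hbv1 : ∀ t : ℝ, 0 ≤ t → deriv (fun ξ => v ξ t) 1 = 0)
    (c₃ : ℝ)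
    (hc₃ : c₃ = (c₂ + ρ) -
      (|α * β| / γ) * (1 + kerNorm (Lker c₂)) * (1 + kerNorm (Kker c₂))) :
    ∀ t : ℝ, 0 ≤ t →
      (∫ x in (0:ℝ)..1, (tw x t) ^ 2) ≤
        Real.exp (-2 * c₃ * t) * ∫ x in (0:ℝ)..1, (tw x 0) ^ 2 ∧
      (∫ x in (0:ℝ)..1, (v x t) ^ 2) ≤
        (β / γ) ^ 2 * (1 + kerNorm (Lker c₂)) ^ 2 *
          (Real.exp (-2 * c₃ * t) * ∫ x in (0:ℝ)..1, (tw x 0) ^ 2) := by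
  have hv_le : ∀ t, 0 ≤ t → l2Norm (fun x => v x t)
      ≤ |β| / γ * (1 + kerNorm (Lker c₂)) * l2Norm (fun x => tw x t) := fun t ht =>
    l2Norm_le_of_elliptic hγ (continuous_Lker c₂) (htw_x t).continuous (hv_x t)
      (hbv0 t ht) (hbv1 t ht) fun x hx => hell x hx t ht
  have hlyapunov : ∀ t, 0 ≤ t → 2 * ∫ x in (0:ℝ)..1, tw x t * deriv (fun τ => tw x τ) t
      ≤ -2 * c₃ * ∫ x in (0:ℝ)..1, tw x t ^ 2 := by
    intro t ht
    have henergy := integral_mul_le_of_parabolic (continuous_Kker c₂) (htw_x t)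
      (hbw0 t ht) (hbw1 t ht) (hv_x t).continuous fun x hx => hpde x hx t ht
    have hcoupling := mul_le_mul_of_nonneg_right (mul_le_mul_of_nonneg_left (hv_le t ht)
      (mul_nonneg (abs_nonneg α) (add_nonneg zero_le_one (kerNorm_nonneg (Kker c₂)))))
      (l2Norm_nonneg fun x => tw x t)
    rw [← sq_l2Norm, hc₃, abs_mul]
    linear_combination 2 * henergy + 2 * hcoupling
  intro t ht
  have hdecay := le_exp_mul_of_hasDerivAt_le_mul
    (fun s _ => hasDerivAt_integral_sq htw_cont (fun x => (htw_t x).differentiable one_ne_zero)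
      htwt_cont 0 1 s) hlyapunov ht
  refine ⟨hdecay, ?_⟩
  rw [← sq_l2Norm] at hdecay ⊢
  calc l2Norm (fun x => v x t) ^ 2
      ≤ (|β| / γ * (1 + kerNorm (Lker c₂)) * l2Norm (fun x => tw x t)) ^ 2 :=
        pow_le_pow_left₀ (l2Norm_nonneg _) (hv_le t ht) 2
    _ ≤ (β / γ) ^ 2 * (1 + kerNorm (Lker c₂)) ^ 2 *
          (Real.exp (-2 * c₃ * t) * ∫ x in (0:ℝ)..1, tw x 0 ^ 2) := by
        rw [mul_pow, mul_pow, div_pow, sq_abs, div_pow]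
        gcongr

/-- Theorem 9: exponential decay of the backstepping target system.
If `c₂ + ρ > (|αβ|/γ)(1 + ‖L‖)(1 + ‖K‖)` then the Lyapunov analysis yields
`∫₀¹ w̃(x,t)²dx ≤ e^{−2c₃t}∫₀¹ w̃(x,0)²dx`, and the elliptic state obeys the
corresponding bound. -/
theorem target_system_exponential_decay (ρ α β γ c₂ : ℝ) (hγ : γ > 0) (hc₂ : c₂ > 0)
    (tw v : ℝ → ℝ → ℝ)
    -- regularity
    (htw_cont : Continuous fun p : ℝ × ℝ => tw p.1 p.2)
    (hv_cont : Continuous fun p : ℝ × ℝ => v p.1 p.2)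
    (htw_x : ∀ t : ℝ, ContDiff ℝ 2 fun x => tw x t)
    (hv_x : ∀ t : ℝ, ContDiff ℝ 2 fun x => v x t)
    (htwx_cont : Continuous fun p : ℝ × ℝ => deriv (fun x => tw x p.2) p.1)
    (htwxx_cont : Continuous fun p : ℝ × ℝ => deriv (deriv (fun x => tw x p.2)) p.1)
    (hvx_cont : Continuous fun p : ℝ × ℝ => deriv (fun x => v x p.2) p.1)
    (hvxx_cont : Continuous fun p : ℝ × ℝ => deriv (deriv (fun x => v x p.2)) p.1)
    (htw_t : ∀ x : ℝ, ContDiff ℝ 1 fun t => tw x t)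
    (htwt_cont : Continuous fun p : ℝ × ℝ => deriv (fun t => tw p.1 t) p.2)
    -- the target system
    (hpde : ∀ x ∈ Set.Icc (0:ℝ) 1, ∀ t : ℝ, 0 ≤ t →
      deriv (fun τ => tw x τ) t =
        deriv (deriv (fun ξ => tw ξ t)) x - (c₂ + ρ) * tw x t + α * v x t -
          α * ∫ y in (0:ℝ)..x, Kker c₂ x y * v y t)
    (hell : ∀ x ∈ Set.Icc (0:ℝ) 1, ∀ t : ℝ, 0 ≤ t →
      (0 : ℝ) = deriv (deriv (fun ξ => v ξ t)) x - γ * v x t + β * tw x t +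
        β * ∫ y in (0:ℝ)..x, Lker c₂ x y * tw y t)
    (hbw0 : ∀ t : ℝ, 0 ≤ t → deriv (fun ξ => tw ξ t) 0 = 0)
    (hbw1 : ∀ t : ℝ, 0 ≤ t → deriv (fun ξ => tw ξ t) 1 = 0)
    (hbv0 : ∀ t : ℝ, 0 ≤ t → deriv (fun ξ => v ξ t) 0 = 0)
    (hbv1 : ∀ t : ℝ, 0 ≤ t → deriv (fun ξ => v ξ t) 1 = 0)
    -- the stability condition
    (hcond : c₂ + ρ >
      (|α * β| / γ) * (1 + kerNorm (Lker c₂)) * (1 + kerNorm (Kker c₂)))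
    (c₃ : ℝ)
    (hc₃ : c₃ = (c₂ + ρ) -
      (|α * β| / γ) * (1 + kerNorm (Lker c₂)) * (1 + kerNorm (Kker c₂))) :
    ∀ t : ℝ, 0 ≤ t →
      (∫ x in (0:ℝ)..1, (tw x t) ^ 2) ≤
        Real.exp (-2 * c₃ * t) * ∫ x in (0:ℝ)..1, (tw x 0) ^ 2 ∧
      (∫ x in (0:ℝ)..1, (v x t) ^ 2) ≤
        (β / γ) ^ 2 * (1 + kerNorm (Lker c₂)) ^ 2 *
          (Real.exp (-2 * c₃ * t) * ∫ x in (0:ℝ)..1, (tw x 0) ^ 2) :=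
  target_system_exponential_decay_general ρ α β γ c₂ hγ tw v htw_cont htw_x hv_x htw_t htwt_cont
    hpde hell hbw0 hbw1 hbv0 hbv1 c₃ hc₃
end

section
/- Fix ρ, α, β, γ ∈ ℝ and o₂ ∈ ℝ with o₂ + γ > 0 and αβ > 0. For n ∈ ℕ set μₙ = −(o₂ + ρ) + αβ/((o₂ + γ) + (nπ)²) − (nπ)². Then μₙ < 0 for every n ∈ ℕ if and only if (o₂ + ρ)·(o₂ + γ) > αβ. -/
/-- spectral criterion for the two-measurement observer error
dynamics.  With `o₂ + γ > 0` and `αβ > 0`, all eigenvalues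
`μₙ = −(o₂+ρ) + αβ/((o₂+γ) + (nπ)²) − (nπ)²` are negative iff
`(o₂+ρ)(o₂+γ) > αβ`. -/
theorem observer_eigenvalues_negative_iff (ρ α β γ o₂ : ℝ)
    (hγ : o₂ + γ > 0) (hαβ : α * β > 0)
    (μ : ℕ → ℝ)
    (hμ : ∀ n : ℕ,
      μ n = -(o₂ + ρ) + α * β / ((o₂ + γ) + (n * Real.pi) ^ 2) - (n * Real.pi) ^ 2) :
    (∀ n : ℕ, μ n < 0) ↔ (o₂ + ρ) * (o₂ + γ) > α * β := by
  constructor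
  · intro h
    have h0 := h 0
    rw [hμ 0] at h0
    simp at h0
    have : α * β / (o₂ + γ) < o₂ + ρ := by linarith
    calc α * β = α * β / (o₂ + γ) * (o₂ + γ) := by field_simp
    _ < (o₂ + ρ) * (o₂ + γ) := by
        exact mul_lt_mul_of_pos_right this hγ
  · intro h n
    rw [hμ n]
    have hx : (0:ℝ) ≤ (n * Real.pi) ^ 2 := sq_nonneg _
    have hden : (0:ℝ) < (o₂ + γ) + (n * Real.pi) ^ 2 := by linarith
    have hdiv : α * β / ((o₂ + γ) + (n * Real.pi) ^ 2) ≤ α * β / (o₂ + γ) :=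
      div_le_div_of_nonneg_left (le_of_lt hαβ) hγ (by linarith)
    have h0 : α * β / (o₂ + γ) < o₂ + ρ := by
      rw [div_lt_iff₀ hγ]; linarith
    linarith
end
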